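/- arXiv:1602.04605 — 2 statements merged into one kernel-verified Lean document; each statement's English description precedes it below -/
import Mathlib

section
/- (Lemma 3: equivalence of the MI and log-loss CEO problems.) The MI-achievable region equals the log-loss achievable region: R_LL = R_MI. -/
open scoped BigOperators Classical

namespace Biclustering

variable {α β γ : Type*}

/-- A probability mass function on a finite type. -/
def IsPMF [Fintype α] (p : α → ℝ) : Prop := (∀ a, 0 ≤ p a) ∧ ∑ a, p a = 1

/-- Shannon entropy (in nats) of a pmf on a finite type. -/
noncomputable def ent [Fintype α] (p : α → ℝ) : ℝ := - ∑ a, p a * Real.log (p a)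

/-- Pushforward (distribution of `f` under `p`). -/
noncomputable def pmap [Fintype α] (f : α → β) (p : α → ℝ) : β → ℝ :=
  fun b => ∑ a, if f a = b then p a else 0

/-- Entropy of the random variable `f` under the joint pmf `p`. -/
noncomputable def Hof [Fintype α] [Fintype β] (p : α → ℝ) (f : α → β) : ℝ := ent (pmap f p)

/-- Mutual information `I(f; g)` under the joint pmf `p`. -/
noncomputable def MI [Fintype α] [Fintype β] [Fintype γ] (p : α → ℝ) (f : α → β) (g : α → γ) : ℝ :=
  Hof p f + Hof p g - Hof p (fun a => (f a, g a))

/-- The pmf of `n` i.i.d. copies of a source with pmf `p`. -/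
noncomputable def iid [Fintype α] (n : ℕ) (p : α → ℝ) : (Fin n → α) → ℝ :=
  fun x => ∏ i, p (x i)

/-- The log-loss fidelity `ζ_B(y, q) = H(Y_B) + (1/n)·log q(y)`, with value `⊥ = −∞` when
`q(y) = 0`.  Here `HYB` is the single-letter entropy `H(Y_B)`. -/
noncomputable def zeta {Y : Type} (HYB : ℝ) (n : ℕ) (q : Y → ℝ) (y : Y) : EReal :=
  if q y = 0 then ⊥ else ((HYB + Real.log (q y) / n : ℝ) : EReal)

/-- The index set `Ω̃`: pairs of nonempty subsets `A ⊆ {1,…,J}`, `B ⊆ {1,…,L}`. -/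
def OmegaT (J L : ℕ) : Type :=
  {AB : Finset (Fin J) × Finset (Fin L) // AB.1.Nonempty ∧ AB.2.Nonempty}

variable {J L : ℕ} {𝒳 : Fin J → Type} {𝒴 : Fin L → Type}
  [∀ j, Fintype (𝒳 j)] [∀ l, Fintype (𝒴 l)]

/-- `(ν_Ω̃, R_J)` is MI-achievable: some `(n, R_J)` code satisfies
`(1/n)·I(U_A; Y_B^n) ≥ ν_{A,B}` for every `(A, B) ∈ Ω̃`. -/
def MIAchievable (p : ((∀ j, 𝒳 j) × (∀ l, 𝒴 l)) → ℝ)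
    (ν : OmegaT J L → ℝ) (R : Fin J → ℝ) : Prop :=
  ∃ (n : ℕ) (M : Fin J → ℕ) (f : ∀ m, (Fin n → 𝒳 m) → Fin (M m)),
    0 < n ∧ (∀ m, Real.log (M m) ≤ n * R m) ∧
    ∀ AB : OmegaT J L,
      ν AB ≤ (MI (iid n p)
        (fun ω => fun m : {m // m ∈ AB.1.1} => f m.1 (fun i => (ω i).1 m.1))
        (fun ω => fun i => fun l : {l // l ∈ AB.1.2} => (ω i).2 l.1)) / n

/-- `(ν_Ω̃, R_J)` is log-loss achievable: some `(n, R_J)` code together with decoders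
`g_{A,B} : M_A → P(𝒴_B^n)` satisfies `E[ζ_B(Y_B^n, g_{A,B}(U_A))] ≥ ν_{A,B}` for every
`(A, B) ∈ Ω̃`. -/
def LLAchievable (p : ((∀ j, 𝒳 j) × (∀ l, 𝒴 l)) → ℝ)
    (ν : OmegaT J L → ℝ) (R : Fin J → ℝ) : Prop :=
  ∃ (n : ℕ) (M : Fin J → ℕ) (f : ∀ m, (Fin n → 𝒳 m) → Fin (M m)),
    0 < n ∧ (∀ m, Real.log (M m) ≤ n * R m) ∧
    ∃ g : ∀ AB : OmegaT J L,
        (∀ m : {m // m ∈ AB.1.1}, Fin (M m.1)) →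
          ((Fin n → ∀ l : {l // l ∈ AB.1.2}, 𝒴 l.1) → ℝ),
      (∀ AB u, IsPMF (g AB u)) ∧
      ∀ AB : OmegaT J L,
        ((ν AB : ℝ) : EReal) ≤
          ∑ ω : Fin n → (∀ j, 𝒳 j) × (∀ l, 𝒴 l),
            ((iid n p ω : ℝ) : EReal)
              * zeta (Hof p (fun w => fun l : {l // l ∈ AB.1.2} => w.2 l.1)) n
                  (g AB (fun m => f m.1 (fun i => (ω i).1 m.1)))
                  (fun i => fun l : {l // l ∈ AB.1.2} => (ω i).2 l.1)

/-! ### Auxiliary lemmas -/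

section Aux

variable {Ω' U' Y' : Type*} [Fintype Ω'] [Fintype U'] [Fintype Y']

set_option linter.unusedSectionVars false

lemma coe_sum' {γ'} {s : Finset γ'} (f : γ' → ℝ) :
    ((∑ a ∈ s, f a : ℝ) : EReal) = ∑ a ∈ s, ((f a : ℝ) : EReal) :=
  map_sum (⟨⟨Real.toEReal, EReal.coe_zero⟩, EReal.coe_add⟩ : ℝ →+ EReal) f s

lemma sum_eq_bot (F : Ω' → EReal) (ω0 : Ω') (h : F ω0 = ⊥) :
    ∑ ω, F ω = ⊥ := by
  rw [← Finset.add_sum_erase _ _ (Finset.mem_univ ω0), h, EReal.bot_add]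

lemma pmap_nonneg {p : Ω' → ℝ} (hp : ∀ a, 0 ≤ p a) (f : Ω' → U') (u : U') :
    0 ≤ pmap f p u :=
  Finset.sum_nonneg fun a _ => by by_cases h : f a = u <;> simp [h, hp a]

lemma sum_pmap (p : Ω' → ℝ) (f : Ω' → U') : ∑ u, pmap f p u = ∑ ω, p ω := by
  unfold pmap
  rw [Finset.sum_comm]
  exact Finset.sum_congr rfl fun ω _ => by simp [Finset.sum_ite_eq]

lemma isPMF_pmap {p : Ω' → ℝ} (hp : IsPMF p) (f : Ω' → U') : IsPMF (pmap f p) :=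
  ⟨pmap_nonneg hp.1 f, by rw [sum_pmap, hp.2]⟩

lemma sum_pmap_mul (p : Ω' → ℝ) (f : Ω' → U') (φ : U' → ℝ) :
    ∑ u, pmap f p u * φ u = ∑ ω, p ω * φ (f ω) := by
  unfold pmap
  simp only [Finset.sum_mul]
  rw [Finset.sum_comm]
  exact Finset.sum_congr rfl fun ω _ => by simp [ite_mul, Finset.sum_ite_eq]

lemma le_pmap_self {p : Ω' → ℝ} (hp : ∀ a, 0 ≤ p a) (f : Ω' → U') (ω : Ω') :
    p ω ≤ pmap f p (f ω) := by
  unfold pmap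
  have := Finset.single_le_sum (f := fun a => if f a = f ω then p a else 0)
    (fun a _ => by by_cases h : f a = f ω <;> simp [h, hp a]) (Finset.mem_univ ω)
  simpa using this

lemma pmap_pos_exists {p : Ω' → ℝ} (hp : ∀ a, 0 ≤ p a) {f : Ω' → U'} {u : U'}
    (h : 0 < pmap f p u) : ∃ ω, f ω = u ∧ 0 < p ω := by
  by_contra hc
  push_neg at hc
  have : pmap f p u = 0 := by
    apply Finset.sum_eq_zero
    intro a _
    by_cases hfa : f a = u
    · simp [hfa, le_antisymm (hc a hfa) (hp a)]
    · simp [hfa]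
  exact absurd this h.ne'

lemma pmap_fst (p : Ω' → ℝ) (F : Ω' → U') (G : Ω' → Y') (u : U') :
    ∑ y, pmap (fun ω => (F ω, G ω)) p (u, y) = pmap F p u := by
  unfold pmap
  rw [Finset.sum_comm]
  refine Finset.sum_congr rfl fun ω _ => ?_
  simp [Prod.ext_iff, ite_and, Finset.sum_ite_eq]

lemma Hof_fst_expand (P : Ω' → ℝ) (F : Ω' → U') (G : Ω' → Y') :
    Hof P F = -∑ uy : U' × Y',
      pmap (fun ω => (F ω, G ω)) P uy * Real.log (pmap F P uy.1) := by
  unfold Hof ent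
  congr 1
  rw [Fintype.sum_prod_type]
  refine Finset.sum_congr rfl fun u _ => ?_
  symm
  trans ∑ y, pmap (fun ω => (F ω, G ω)) P (u, y) * Real.log (pmap F P u)
  · exact Finset.sum_congr rfl fun y _ => rfl
  · rw [← Finset.sum_mul, pmap_fst P F G u]

lemma gibbs_le {P : Ω' → ℝ} (hP : IsPMF P) (F : Ω' → U') (G : Ω' → Y')
    {q : U' → Y' → ℝ} (hq : ∀ u, IsPMF (q u))
    (hpos : ∀ ω, 0 < P ω → 0 < q (F ω) (G ω)) :
    ∑ ω, P ω * Real.log (q (F ω) (G ω))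
      ≤ Hof P F - Hof P (fun ω => (F ω, G ω)) := by
  set π := pmap (fun ω => (F ω, G ω)) P with hπ
  set πF := pmap F P with hπF
  have hπ0 : ∀ uy : U' × Y', 0 ≤ π uy := fun uy => pmap_nonneg hP.1 _ uy
  have hπF0 : ∀ u, 0 ≤ πF u := fun u => pmap_nonneg hP.1 F u
  have hπle : ∀ uy : U' × Y', π uy ≤ πF uy.1 := by
    intro uy
    rw [hπF, ← pmap_fst P F G uy.1]
    exact Finset.single_le_sum (f := fun y => π (uy.1, y))
      (fun y _ => hπ0 _) (Finset.mem_univ uy.2)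
  have hqpos : ∀ uy : U' × Y', 0 < π uy → 0 < q uy.1 uy.2 := by
    intro uy h
    obtain ⟨ω, hfω, hpω⟩ := pmap_pos_exists hP.1 h
    have h1 : F ω = uy.1 := congrArg Prod.fst hfω
    have h2 : G ω = uy.2 := congrArg Prod.snd hfω
    simpa [h1, h2] using hpos ω hpω
  have hLHS : ∑ ω, P ω * Real.log (q (F ω) (G ω))
      = ∑ uy : U' × Y', π uy * Real.log (q uy.1 uy.2) :=
    (sum_pmap_mul P (fun ω => (F ω, G ω)) (fun uy => Real.log (q uy.1 uy.2))).symm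
  have hF : Hof P F = -∑ uy : U' × Y', π uy * Real.log (πF uy.1) :=
    Hof_fst_expand P F G
  have hFG : Hof P (fun ω => (F ω, G ω)) = -∑ uy : U' × Y', π uy * Real.log (π uy) := rfl
  have key : ∀ uy : U' × Y',
      π uy * (Real.log (q uy.1 uy.2) - Real.log (π uy) + Real.log (πF uy.1))
        ≤ q uy.1 uy.2 * πF uy.1 - π uy := by
    intro uy
    rcases eq_or_lt_of_le (hπ0 uy) with h0 | h0
    · rw [← h0]
      simp [mul_nonneg ((hq uy.1).1 uy.2) (hπF0 uy.1)]
    · have hq1 : 0 < q uy.1 uy.2 := hqpos uy h0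
      have hπF1 : 0 < πF uy.1 := lt_of_lt_of_le h0 (hπle uy)
      have hx : 0 < q uy.1 uy.2 * πF uy.1 / π uy := by positivity
      have hlog := Real.log_le_sub_one_of_pos hx
      have hexp : Real.log (q uy.1 uy.2 * πF uy.1 / π uy)
          = Real.log (q uy.1 uy.2) - Real.log (π uy) + Real.log (πF uy.1) := by
        rw [Real.log_div (by positivity) h0.ne', Real.log_mul hq1.ne' hπF1.ne']
        ring
      rw [← hexp]
      calc π uy * Real.log (q uy.1 uy.2 * πF uy.1 / π uy)
          ≤ π uy * (q uy.1 uy.2 * πF uy.1 / π uy - 1) :=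
            mul_le_mul_of_nonneg_left hlog h0.le
        _ = q uy.1 uy.2 * πF uy.1 - π uy := by field_simp
  have hsum0 : ∑ uy : U' × Y', (q uy.1 uy.2 * πF uy.1 - π uy) = 0 := by
    rw [Finset.sum_sub_distrib]
    have h1 : ∑ uy : U' × Y', q uy.1 uy.2 * πF uy.1 = 1 := by
      rw [Fintype.sum_prod_type]
      have h' : ∀ u, ∑ y, q u y * πF u = πF u := fun u => by
        rw [← Finset.sum_mul, (hq u).2, one_mul]
      rw [Finset.sum_congr rfl fun u _ => h' u, sum_pmap, hP.2]
    have h2 : ∑ uy : U' × Y', π uy = 1 := by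
      rw [hπ, sum_pmap, hP.2]
    rw [h1, h2, sub_self]
  have hmain := le_trans (Finset.sum_le_sum fun uy _ => key uy) (le_of_eq hsum0)
  have hexpand : ∑ uy : U' × Y',
      π uy * (Real.log (q uy.1 uy.2) - Real.log (π uy) + Real.log (πF uy.1))
      = ∑ uy : U' × Y', π uy * Real.log (q uy.1 uy.2)
        - ∑ uy : U' × Y', π uy * Real.log (π uy)
        + ∑ uy : U' × Y', π uy * Real.log (πF uy.1) := by
    rw [← Finset.sum_sub_distrib, ← Finset.sum_add_distrib]
    exact Finset.sum_congr rfl fun uy _ => by ring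
  rw [hLHS, hF, hFG]
  rw [hexpand] at hmain
  linarith

/-- conditional pmf of `G` given `F = u`, with uniform fallback. -/
noncomputable def condq (P : Ω' → ℝ) (F : Ω' → U') (G : Ω' → Y') : U' → Y' → ℝ :=
  fun u y => if pmap F P u = 0 then (Fintype.card Y' : ℝ)⁻¹
    else pmap (fun ω => (F ω, G ω)) P (u, y) / pmap F P u

lemma condq_isPMF [Nonempty Y'] {P : Ω' → ℝ} (hP : IsPMF P) (F : Ω' → U') (G : Ω' → Y')
    (u : U') : IsPMF (condq P F G u) := by
  unfold condq
  by_cases h : pmap F P u = 0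
  · simp only [h, if_pos]
    constructor
    · intro y; positivity
    · rw [Finset.sum_const, Finset.card_univ, nsmul_eq_mul,
        mul_inv_cancel₀ (by exact_mod_cast Fintype.card_ne_zero)]
  · simp only [h, if_neg, if_false]
    have hpos : 0 < pmap F P u := lt_of_le_of_ne (pmap_nonneg hP.1 F u) (Ne.symm h)
    constructor
    · intro y
      exact div_nonneg (pmap_nonneg hP.1 _ _) hpos.le
    · rw [← Finset.sum_div, pmap_fst P F G u, div_self h]

lemma condq_pos {P : Ω' → ℝ} (hP : IsPMF P) (F : Ω' → U') (G : Ω' → Y')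
    {ω : Ω'} (h : 0 < P ω) : 0 < condq P F G (F ω) (G ω) := by
  have h1 : 0 < pmap (fun ω => (F ω, G ω)) P (F ω, G ω) :=
    lt_of_lt_of_le h (le_pmap_self hP.1 (fun ω => (F ω, G ω)) ω)
  have h2 : 0 < pmap F P (F ω) := lt_of_lt_of_le h (le_pmap_self hP.1 F ω)
  unfold condq
  rw [if_neg h2.ne']
  exact div_pos h1 h2

lemma condq_gibbs {P : Ω' → ℝ} (hP : IsPMF P) (F : Ω' → U') (G : Ω' → Y') :
    ∑ ω, P ω * Real.log (condq P F G (F ω) (G ω))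
      = Hof P F - Hof P (fun ω => (F ω, G ω)) := by
  set π := pmap (fun ω => (F ω, G ω)) P with hπ
  set πF := pmap F P with hπF
  have hπle : ∀ uy : U' × Y', π uy ≤ πF uy.1 := by
    intro uy
    rw [hπF, ← pmap_fst P F G uy.1]
    exact Finset.single_le_sum (f := fun y => π (uy.1, y))
      (fun y _ => pmap_nonneg hP.1 _ _) (Finset.mem_univ uy.2)
  have hLHS : ∑ ω, P ω * Real.log (condq P F G (F ω) (G ω))
      = ∑ uy : U' × Y', π uy * Real.log (condq P F G uy.1 uy.2) :=
    (sum_pmap_mul P (fun ω => (F ω, G ω)) (fun uy => Real.log (condq P F G uy.1 uy.2))).symm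
  have hF : Hof P F = -∑ uy : U' × Y', π uy * Real.log (πF uy.1) :=
    Hof_fst_expand P F G
  have hFG : Hof P (fun ω => (F ω, G ω)) = -∑ uy : U' × Y', π uy * Real.log (π uy) := rfl
  rw [hLHS, hF, hFG, neg_sub_neg, ← Finset.sum_sub_distrib]
  refine Finset.sum_congr rfl fun uy _ => ?_
  rcases eq_or_lt_of_le (pmap_nonneg hP.1 (fun ω => (F ω, G ω)) uy : 0 ≤ π uy) with h0 | h0
  · have h0' : π uy = 0 := h0.symm
    rw [h0']; ring
  · have hπF1 : 0 < πF uy.1 := lt_of_lt_of_le h0 (hπle uy)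
    have hcq : condq P F G uy.1 uy.2 = π uy / πF uy.1 := by
      unfold condq
      rw [if_neg hπF1.ne']
    rw [hcq, Real.log_div h0.ne' hπF1.ne']
    ring

end Aux

section AuxIID

variable {α' β' : Type*} [Fintype α'] [Fintype β']

set_option linter.unusedSectionVars false

noncomputable def ind (c : Prop) (x : ℝ) : ℝ := @ite ℝ c (Classical.propDecidable c) x 0

lemma ind_eq_ite {c : Prop} [Decidable c] (x : ℝ) : ind c x = if c then x else 0 := by
  by_cases h : c <;> simp [ind, h]

lemma ind_congr {c d : Prop} (h : c ↔ d) (x : ℝ) : ind c x = ind d x := by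
  by_cases hc : c
  · simp [ind, hc, h.mp hc]
  · have hd : ¬d := fun hd => hc (h.mpr hd)
    simp [ind, hc, hd]

lemma ind_mul_ind (c d : Prop) (x y : ℝ) :
    ind c x * ind d y = ind (c ∧ d) (x * y) := by
  by_cases hc : c <;> by_cases hd : d <;> simp [ind, hc, hd]

lemma pmap_eq_ind (f : α' → β') (p : α' → ℝ) (b : β') :
    pmap f p b = ∑ a, ind (f a = b) (p a) :=
  Finset.sum_congr rfl fun a _ => (ind_eq_ite _).symm

lemma sum_succ_cons {n : ℕ} (f : (Fin (n + 1) → α') → ℝ) :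
    ∑ x, f x = ∑ ay : α' × (Fin n → α'), f (Fin.cons ay.1 ay.2) :=
  (Equiv.sum_comp (Fin.consEquiv fun _ => α') f).symm

lemma iid_cons {n : ℕ} (p : α' → ℝ) (a : α') (y : Fin n → α') :
    iid (n + 1) p (Fin.cons a y) = p a * iid n p y := by
  unfold iid
  rw [Fin.prod_univ_succ]
  simp

lemma iid_nonneg {p : α' → ℝ} (hp : ∀ a, 0 ≤ p a) (n : ℕ) (x : Fin n → α') :
    0 ≤ iid n p x :=
  Finset.prod_nonneg fun i _ => hp (x i)

lemma sum_iid {p : α' → ℝ} (hp : IsPMF p) (n : ℕ) : ∑ x, iid n p x = 1 := by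
  induction n with
  | zero => simp [iid]
  | succ n ih =>
    rw [sum_succ_cons (f := iid (n + 1) p)]
    rw [Fintype.sum_prod_type]
    simp only [iid_cons]
    calc ∑ a, ∑ y : Fin n → α', p a * iid n p y
        = ∑ a, p a * ∑ y : Fin n → α', iid n p y :=
          Finset.sum_congr rfl fun a _ => (Finset.mul_sum _ _ _).symm
      _ = 1 := by rw [Finset.sum_congr rfl fun a _ => by rw [ih]]; simp [hp.2]

lemma isPMF_iid {p : α' → ℝ} (hp : IsPMF p) (n : ℕ) : IsPMF (iid n p) :=
  ⟨iid_nonneg hp.1 n, sum_iid hp n⟩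

lemma ent_prod {p : α' → ℝ} {q : β' → ℝ} (hp : IsPMF p) (hq : IsPMF q) :
    ent (fun ab : α' × β' => p ab.1 * q ab.2) = ent p + ent q := by
  unfold ent
  have key : ∀ ab : α' × β', p ab.1 * q ab.2 * Real.log (p ab.1 * q ab.2)
      = q ab.2 * (p ab.1 * Real.log (p ab.1)) + p ab.1 * (q ab.2 * Real.log (q ab.2)) := by
    rintro ⟨a, b⟩
    by_cases ha : p a = 0
    · simp [ha]
    by_cases hb : q b = 0
    · simp [hb]
    rw [Real.log_mul ha hb]; ring
  rw [Finset.sum_congr rfl fun ab _ => key ab, Finset.sum_add_distrib,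
    Fintype.sum_prod_type, Fintype.sum_prod_type]
  have h1 : ∑ a, ∑ b, q b * (p a * Real.log (p a)) = ∑ a, p a * Real.log (p a) := by
    refine Finset.sum_congr rfl fun a _ => ?_
    rw [← Finset.sum_mul, hq.2, one_mul]
  have h2 : ∑ a, ∑ b, p a * (q b * Real.log (q b)) = ∑ b, q b * Real.log (q b) := by
    rw [Finset.sum_comm]
    refine Finset.sum_congr rfl fun b _ => ?_
    rw [← Finset.sum_mul, hp.2, one_mul]
  rw [h1, h2]; ring

lemma ent_iid {p : α' → ℝ} (hp : IsPMF p) (n : ℕ) : ent (iid n p) = n * ent p := by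
  induction n with
  | zero => simp [ent, iid]
  | succ n ih =>
    have h0 : ent (iid (n + 1) p)
        = ent (fun ab : α' × (Fin n → α') => p ab.1 * iid n p ab.2) := by
      unfold ent
      rw [sum_succ_cons (f := fun x => iid (n + 1) p x * Real.log (iid (n + 1) p x))]
      congr 1
      exact Finset.sum_congr rfl fun ay _ => by rw [iid_cons]
    rw [h0, ent_prod hp (isPMF_iid hp n), ih]
    push_cast; ring

lemma pmap_iid (p : α' → ℝ) (h : α' → β') (n : ℕ) :
    pmap (fun x i => h (x i)) (iid n p) = iid n (pmap h p) := by
  induction n with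
  | zero =>
    funext b
    simp [pmap, iid, eq_iff_true_of_subsingleton]
  | succ n ih =>
    funext b
    have hcond : ∀ (a : α') (y : Fin n → α'),
        ((fun i : Fin (n + 1) => h (Fin.cons (α := fun _ => α') a y i)) = b)
          ↔ (h a = b 0 ∧ (fun i => h (y i)) = Fin.tail b) := by
      intro a y
      have he : (fun i : Fin (n + 1) => h (Fin.cons (α := fun _ => α') a y i))
          = Fin.cons (α := fun _ => β') (h a) (fun i => h (y i)) := by
        funext i
        refine Fin.cases ?_ ?_ i <;> simp
      rw [he]
      constructor
      · intro he2
        rw [← he2]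
        simp [Fin.tail]
      · rintro ⟨h1, h2⟩
        rw [h1, h2, Fin.cons_self_tail]
    have hRHS : iid (n + 1) (pmap h p) b
        = pmap h p (b 0) * iid n (pmap h p) (Fin.tail b) := by
      unfold iid
      rw [Fin.prod_univ_succ]
      rfl
    calc pmap (fun x i => h (x i)) (iid (n + 1) p) b
        = ∑ x : Fin (n + 1) → α', ind ((fun i => h (x i)) = b) (iid (n + 1) p x) :=
          pmap_eq_ind _ _ _
      _ = ∑ ay : α' × (Fin n → α'),
            ind ((fun i : Fin (n + 1) => h (Fin.cons (α := fun _ => α') ay.1 ay.2 i)) = b)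
              (iid (n + 1) p (Fin.cons ay.1 ay.2)) :=
          sum_succ_cons (f := fun x => ind ((fun i => h (x i)) = b) (iid (n + 1) p x))
      _ = ∑ a, ∑ y : Fin n → α', ind (h a = b 0) (p a) *
            ind ((fun i => h (y i)) = Fin.tail b) (iid n p y) := by
          rw [Fintype.sum_prod_type]
          refine Finset.sum_congr rfl fun a _ => Finset.sum_congr rfl fun y _ => ?_
          rw [ind_mul_ind, iid_cons]
          exact ind_congr (hcond a y) _
      _ = (∑ a, ind (h a = b 0) (p a)) *
            (∑ y : Fin n → α', ind ((fun i => h (y i)) = Fin.tail b) (iid n p y)) :=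
          (Finset.sum_mul_sum _ _ _ _).symm
      _ = pmap h p (b 0) * pmap (fun x i => h (x i)) (iid n p) (Fin.tail b) := by
          rw [← pmap_eq_ind, ← pmap_eq_ind]
      _ = iid (n + 1) (pmap h p) b := by rw [ih]; exact hRHS.symm

end AuxIID

section AuxZeta

variable {Ω' : Type*} {U' Y' : Type} [Fintype Ω'] [Fintype U'] [Fintype Y']

set_option linter.unusedSectionVars false

lemma sum_zeta_coe {P : Ω' → ℝ} (hP0 : ∀ ω, 0 ≤ P ω) (H : ℝ) (n : ℕ)
    (q : U' → Y' → ℝ) (F : Ω' → U') (G : Ω' → Y')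
    (hpos : ∀ ω, 0 < P ω → q (F ω) (G ω) ≠ 0) :
    (∑ ω, ((P ω : ℝ) : EReal) * zeta H n (q (F ω)) (G ω))
      = ((∑ ω, P ω * (H + Real.log (q (F ω) (G ω)) / n) : ℝ) : EReal) := by
  rw [coe_sum']
  refine Finset.sum_congr rfl fun ω _ => ?_
  rcases eq_or_lt_of_le (hP0 ω) with h0 | h0
  · rw [← h0]
    simp [EReal.zero_mul]
  · unfold zeta
    rw [if_neg (hpos ω h0), ← EReal.coe_mul]

lemma avg_log {P : Ω' → ℝ} (hP : ∑ ω, P ω = 1) (H : ℝ) (n : ℕ) (r : Ω' → ℝ) :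
    ∑ ω, P ω * (H + r ω / n) = H + (∑ ω, P ω * r ω) / n := by
  have : ∀ ω, P ω * (H + r ω / n) = P ω * H + (P ω * r ω) / n := fun ω => by ring
  rw [Finset.sum_congr rfl fun ω _ => this ω, Finset.sum_add_distrib,
    ← Finset.sum_mul, ← Finset.sum_div, hP, one_mul]

end AuxZeta

/-- **Lemma 3 (equivalence of the MI and log-loss CEO problems):** `R_LL = R_MI`. -/
theorem log_loss_equals_MI (p : ((∀ j, 𝒳 j) × (∀ l, 𝒴 l)) → ℝ) (hp : IsPMF p) :
    { x : (OmegaT J L → ℝ) × (Fin J → ℝ) | LLAchievable p x.1 x.2 }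
      = { x : (OmegaT J L → ℝ) × (Fin J → ℝ) | MIAchievable p x.1 x.2 } := by
  have hw : Nonempty ((∀ j, 𝒳 j) × (∀ l, 𝒴 l)) := by
    by_contra hc
    rw [not_nonempty_iff] at hc
    have h1 := hp.2
    rw [Fintype.sum_empty] at h1
    norm_num at h1
  obtain ⟨w0⟩ := hw
  ext x
  obtain ⟨ν, R⟩ := x
  simp only [Set.mem_setOf_eq]
  constructor
  · -- log-loss achievable → MI achievable
    rintro ⟨n, M, f, hn, hR, g, hgpmf, hg⟩
    have hn' : (0 : ℝ) < n := by exact_mod_cast hn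
    have hP : IsPMF (iid n p) := isPMF_iid hp n
    refine ⟨n, M, f, hn, hR, fun AB => ?_⟩
    have hgAB := hg AB
    set F : (Fin n → (∀ j, 𝒳 j) × (∀ l, 𝒴 l)) → (∀ m : {m // m ∈ AB.1.1}, Fin (M m.1)) :=
      fun ω => fun m : {m // m ∈ AB.1.1} => f m.1 (fun i => (ω i).1 m.1) with hFdef
    set G : (Fin n → (∀ j, 𝒳 j) × (∀ l, 𝒴 l)) → (Fin n → ∀ l : {l // l ∈ AB.1.2}, 𝒴 l.1) :=
      fun ω => fun i => fun l : {l // l ∈ AB.1.2} => (ω i).2 l.1 with hGdef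
    set H : ℝ := Hof p (fun w => fun l : {l // l ∈ AB.1.2} => w.2 l.1) with hHdef
    by_cases hbad : ∃ ω, 0 < iid n p ω ∧ g AB (F ω) (G ω) = 0
    · -- degenerate: the log-loss payoff is −∞, contradicting the hypothesis
      exfalso
      obtain ⟨ω0, hω0, hq0⟩ := hbad
      have hbot : ((ν AB : ℝ) : EReal) ≤ ⊥ := by
        refine le_trans hgAB (le_of_eq (sum_eq_bot _ ω0 ?_))
        show ((iid n p ω0 : ℝ) : EReal) * zeta H n (g AB (F ω0)) (G ω0) = ⊥
        unfold zeta
        rw [if_pos hq0]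
        exact EReal.coe_mul_bot_of_pos hω0
      exact absurd (le_bot_iff.mp hbot) (EReal.coe_ne_bot _)
    · push_neg at hbad
      have hs := sum_zeta_coe hP.1 H n (g AB) F G hbad
      have hν : ν AB ≤ ∑ ω, iid n p ω * (H + Real.log (g AB (F ω) (G ω)) / n) :=
        EReal.coe_le_coe_iff.mp (le_trans hgAB (le_of_eq hs))
      have halg := avg_log hP.2 H n (fun ω => Real.log (g AB (F ω) (G ω)))
      rw [halg] at hν
      have hgibbs := gibbs_le hP F G (hgpmf AB)
        (fun ω h => lt_of_le_of_ne (((hgpmf AB) _).1 _) (Ne.symm (hbad ω h)))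
      have hHof : Hof (iid n p) G = n * H := by
        have h1 : pmap G (iid n p)
            = iid n (pmap (fun w => fun l : {l // l ∈ AB.1.2} => w.2 l.1) p) :=
          pmap_iid p (fun w => fun l : {l // l ∈ AB.1.2} => w.2 l.1) n
        show ent (pmap G (iid n p)) = n * H
        rw [h1, ent_iid (isPMF_pmap hp _) n, hHdef]
        rfl
      have hMIeq : MI (iid n p) F G / n
          = H + (Hof (iid n p) F - Hof (iid n p) (fun ω => (F ω, G ω))) / n := by
        show (Hof (iid n p) F + Hof (iid n p) G
            - Hof (iid n p) (fun ω => (F ω, G ω))) / n = _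
        rw [hHof]
        field_simp
        ring
      have hdiv : (∑ ω, iid n p ω * Real.log (g AB (F ω) (G ω))) / n
          ≤ (Hof (iid n p) F - Hof (iid n p) (fun ω => (F ω, G ω))) / n := by
        gcongr
      rw [hMIeq]
      linarith
  · -- MI achievable → log-loss achievable
    rintro ⟨n, M, f, hn, hR, hMI⟩
    have hn' : (0 : ℝ) < n := by exact_mod_cast hn
    have hP : IsPMF (iid n p) := isPMF_iid hp n
    refine ⟨n, M, f, hn, hR, fun AB => condq (iid n p)
        (fun ω => fun m : {m // m ∈ AB.1.1} => f m.1 (fun i => (ω i).1 m.1))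
        (fun ω => fun i => fun l : {l // l ∈ AB.1.2} => (ω i).2 l.1), ?_, ?_⟩
    · intro AB u
      haveI : Nonempty (Fin n → ∀ l : {l // l ∈ AB.1.2}, 𝒴 l.1) := ⟨fun _ l => w0.2 l.1⟩
      exact condq_isPMF hP _ _ u
    · intro AB
      have hMIAB := hMI AB
      set F : (Fin n → (∀ j, 𝒳 j) × (∀ l, 𝒴 l)) → (∀ m : {m // m ∈ AB.1.1}, Fin (M m.1)) :=
        fun ω => fun m : {m // m ∈ AB.1.1} => f m.1 (fun i => (ω i).1 m.1) with hFdef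
      set G : (Fin n → (∀ j, 𝒳 j) × (∀ l, 𝒴 l)) → (Fin n → ∀ l : {l // l ∈ AB.1.2}, 𝒴 l.1) :=
        fun ω => fun i => fun l : {l // l ∈ AB.1.2} => (ω i).2 l.1 with hGdef
      set H : ℝ := Hof p (fun w => fun l : {l // l ∈ AB.1.2} => w.2 l.1) with hHdef
      have hpos : ∀ ω, 0 < iid n p ω → condq (iid n p) F G (F ω) (G ω) ≠ 0 :=
        fun ω h => (condq_pos hP F G h).ne'
      have hs := sum_zeta_coe hP.1 H n (condq (iid n p) F G) F G hpos
      have hgeq := condq_gibbs hP F G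
      have halg := avg_log hP.2 H n
        (fun ω => Real.log (condq (iid n p) F G (F ω) (G ω)))
      have hHof : Hof (iid n p) G = n * H := by
        have h1 : pmap G (iid n p)
            = iid n (pmap (fun w => fun l : {l // l ∈ AB.1.2} => w.2 l.1) p) :=
          pmap_iid p (fun w => fun l : {l // l ∈ AB.1.2} => w.2 l.1) n
        show ent (pmap G (iid n p)) = n * H
        rw [h1, ent_iid (isPMF_pmap hp _) n, hHdef]
        rfl
      have hMIeq : MI (iid n p) F G / n
          = H + (Hof (iid n p) F - Hof (iid n p) (fun ω => (F ω, G ω))) / n := by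
        show (Hof (iid n p) F + Hof (iid n p) G
            - Hof (iid n p) (fun ω => (F ω, G ω))) / n = _
        rw [hHof]
        field_simp
        ring
      have hreal : ν AB
          ≤ ∑ ω, iid n p ω * (H + Real.log (condq (iid n p) F G (F ω) (G ω)) / n) := by
        rw [halg, hgeq]
        rw [hMIeq] at hMIAB
        exact hMIAB
      exact le_trans (EReal.coe_le_coe_iff.mpr hreal) (le_of_eq hs.symm)

end Biclustering
end

section
/- (Random coding lemma, probabilistic core of Lemma 5.) Let F be a random variable taking finitely many values (a random code), let E_1, …, E_m be events on the same probability space, and let δ > 0 satisfy P(E_i) ≤ δ for every i ∈ {1,…,m} and m·√δ < 1. Then there exists a value f with P(F = f) > 0 such that P(E_i | F = f) ≤ √δ for every i ∈ {1,…,m}. -/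
open MeasureTheory ProbabilityTheory

private lemma aux_sum_biUnion_le {ι α : Type*} [DecidableEq α] (s : Finset ι)
    (t : ι → Finset α) (g : α → ENNReal) :
    ∑ x ∈ s.biUnion t, g x ≤ ∑ i ∈ s, ∑ x ∈ t i, g x := by
  classical
  induction s using Finset.induction_on with
  | empty => simp
  | @insert a s ha ih =>
    rw [Finset.biUnion_insert, Finset.sum_insert ha]
    calc ∑ x ∈ t a ∪ s.biUnion t, g x
        ≤ ∑ x ∈ t a, g x + ∑ x ∈ s.biUnion t, g x := by
          rw [← Finset.sum_union_inter]; exact le_self_add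
      _ ≤ ∑ x ∈ t a, g x + ∑ i ∈ s, ∑ x ∈ t i, g x := add_le_add le_rfl ih

/-- **Random coding lemma (probabilistic core of Lemma 5):** let `F` be a random variable
taking finitely many values (a random code) and let `E_1, …, E_m` be events with
`P(E_i) ≤ δ` for every `i`.  If `m·√δ < 1`, then there is a value `f` of positive
probability such that `P(E_i | F = f) ≤ √δ` for every `i`. -/
theorem random_coding_lemma
    {Ω : Type*} [MeasurableSpace Ω] (P : Measure Ω) [IsProbabilityMeasure P]
    {γ : Type*} [MeasurableSpace γ] [MeasurableSingletonClass γ] [Finite γ]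
    (F : Ω → γ) (hF : Measurable F)
    {m : ℕ} (E : Fin m → Set Ω) (hE : ∀ i, MeasurableSet (E i))
    {δ : ℝ} (hδ : 0 < δ) (hPE : ∀ i, P (E i) ≤ ENNReal.ofReal δ)
    (hm : (m : ℝ) * Real.sqrt δ < 1) :
    ∃ f : γ, 0 < P (F ⁻¹' {f}) ∧
      ∀ i, ProbabilityTheory.cond P (F ⁻¹' {f}) (E i) ≤ ENNReal.ofReal (Real.sqrt δ) := by
  classical
  cases nonempty_fintype γ
  by_contra hcon
  push_neg at hcon
  set c := ENNReal.ofReal (Real.sqrt δ) with hc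
  have hs0 : 0 < Real.sqrt δ := Real.sqrt_pos.2 hδ
  have hc0 : c ≠ 0 := by
    simp only [hc, ne_eq, ENNReal.ofReal_eq_zero, not_le]; exact hs0
  have hcT : c ≠ ⊤ := ENNReal.ofReal_ne_top
  have hcc : c * c = ENNReal.ofReal δ := by
    rw [hc, ← ENNReal.ofReal_mul (Real.sqrt_nonneg δ), Real.mul_self_sqrt hδ.le]
  have hFm : ∀ f : γ, MeasurableSet (F ⁻¹' {f}) := fun f => hF (measurableSet_singleton f)
  have key : ∀ (i : Fin m) (f : γ), c < ProbabilityTheory.cond P (F ⁻¹' {f}) (E i) →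
      c * P (F ⁻¹' {f}) ≤ P (F ⁻¹' {f} ∩ E i) := by
    intro i f hf
    rw [ProbabilityTheory.cond_apply (hFm f)] at hf
    rcases eq_or_ne (P (F ⁻¹' {f})) 0 with h0 | h0
    · simp [h0]
    · have hfin : P (F ⁻¹' {f}) ≠ ⊤ := measure_ne_top P _
      calc c * P (F ⁻¹' {f})
          ≤ ((P (F ⁻¹' {f}))⁻¹ * P (F ⁻¹' {f} ∩ E i)) * P (F ⁻¹' {f}) :=
            mul_le_mul_left hf.le _
        _ = P (F ⁻¹' {f} ∩ E i) := by
            rw [mul_comm (P (F ⁻¹' {f}))⁻¹, mul_assoc, ENNReal.inv_mul_cancel h0 hfin,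
              mul_one]
  set Bad : Fin m → Finset γ := fun i =>
    Finset.univ.filter (fun f => c < ProbabilityTheory.cond P (F ⁻¹' {f}) (E i)) with hBad
  have hBadSum : ∀ i, ∑ f ∈ Bad i, P (F ⁻¹' {f}) ≤ c := by
    intro i
    have h1 : c * ∑ f ∈ Bad i, P (F ⁻¹' {f}) ≤ P (E i) := by
      rw [Finset.mul_sum]
      calc ∑ f ∈ Bad i, c * P (F ⁻¹' {f})
          ≤ ∑ f ∈ Bad i, P (F ⁻¹' {f} ∩ E i) := by
            refine Finset.sum_le_sum fun f hf => key i f ?_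
            simpa [hBad] using hf
        _ = P (⋃ f ∈ Bad i, F ⁻¹' {f} ∩ E i) := by
            rw [measure_biUnion_finset ?_ fun f _ => (hFm f).inter (hE i)]
            intro a _ b _ hab
            refine Set.disjoint_left.2 fun x hx hx' => hab ?_
            have h1 := hx.1; have h2 := hx'.1
            simp only [Set.mem_preimage, Set.mem_singleton_iff] at h1 h2
            rw [← h1, ← h2]
        _ ≤ P (E i) := by
            refine measure_mono ?_
            intro x hx
            simp only [Set.mem_iUnion] at hx
            obtain ⟨f, _, _, hxE⟩ := hx
            exact hxE
    have h2 : c * ∑ f ∈ Bad i, P (F ⁻¹' {f}) ≤ c * c := h1.trans (by rw [hcc]; exact hPE i)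
    exact (ENNReal.mul_le_mul_iff_right hc0 hcT).1 h2
  have htot : (1 : ENNReal) = ∑ f : γ, P (F ⁻¹' {f}) := by
    have := MeasureTheory.sum_measure_preimage_singleton (μ := P) (f := F)
      (Finset.univ : Finset γ) (fun f _ => hFm f)
    rw [this]
    simp [measure_univ]
  have hzero : ∀ f : γ, f ∉ Finset.univ.biUnion Bad → P (F ⁻¹' {f}) = 0 := by
    intro f hf
    by_contra h0
    obtain ⟨i, hi⟩ := hcon f (pos_iff_ne_zero.2 h0)
    exact hf (Finset.mem_biUnion.2 ⟨i, Finset.mem_univ i,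
      Finset.mem_filter.2 ⟨Finset.mem_univ f, hi⟩⟩)
  have hlt : (1 : ENNReal) < 1 := by
    calc (1 : ENNReal) = ∑ f : γ, P (F ⁻¹' {f}) := htot
      _ = ∑ f ∈ Finset.univ.biUnion Bad, P (F ⁻¹' {f}) := by
          refine (Finset.sum_subset (Finset.subset_univ _) ?_).symm
          exact fun f _ hf => hzero f hf
      _ ≤ ∑ i, ∑ f ∈ Bad i, P (F ⁻¹' {f}) := aux_sum_biUnion_le Finset.univ Bad _
      _ ≤ ∑ _i : Fin m, c := Finset.sum_le_sum fun i _ => hBadSum i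
      _ = (m : ENNReal) * c := by simp [mul_comm]
      _ < 1 := by
          rw [hc, ← ENNReal.ofReal_natCast, ← ENNReal.ofReal_mul (by positivity)]
          exact ENNReal.ofReal_lt_one.2 hm
  exact absurd hlt (lt_irrefl 1)
end
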